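/- For every natural number m ≥ 1, there exists a convex set A ⊆ ℤ of cardinality 2m and a non-zero integer d ∈ A - A such that r_{A-A}(d) ≥ m. -/

import Mathlib

open Pointwise

/-- A finite set `A`, written in increasing order as `a_1 < a_2 < ... < a_n`,
is convex if `a_i - a_{i-1} < a_{i+1} - a_i` for all `2 ≤ i ≤ n-1`. -/
def IsConvexSet {α : Type*} [LinearOrder α] [Sub α] (A : Finset α) : Prop :=
  ∀ (i : ℕ) (h : i + 2 < (A.sort (· ≤ ·)).length),
    (A.sort (· ≤ ·)).get ⟨i + 1, by omega⟩ - (A.sort (· ≤ ·)).get ⟨i, by omega⟩ <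
      (A.sort (· ≤ ·)).get ⟨i + 2, h⟩ - (A.sort (· ≤ ·)).get ⟨i + 1, by omega⟩

/-- The representation function `r_{A-A}(d) = |{(a,b) ∈ A × A : a - b = d}|`. -/
def repDiff {α : Type*} [DecidableEq α] [Sub α] (A : Finset α) (d : α) : ℕ :=
  ((A ×ˢ A).filter fun p => p.1 - p.2 = d).card

def gg (m j : ℕ) : ℤ :=
  if _ : j < m then (m:ℤ) + j + 1
  else if _ : j < 2*m - 1 then gg m (2*(j-m)) + gg m (2*(j-m)+1)
  else 0
termination_by j
decreasing_by all_goals omega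

lemma gg_base {m j : ℕ} (h : j < m) : gg m j = (m:ℤ) + j + 1 := by
  rw [gg]; simp [h]

lemma gg_rec {m j : ℕ} (h1 : m ≤ j) (h2 : j < 2*m-1) :
    gg m j = gg m (2*(j-m)) + gg m (2*(j-m)+1) := by
  rw [gg]; simp [Nat.not_lt.mpr h1, h2]

lemma gg_mono {m : ℕ} : ∀ j, j < 2*m-1 → ∀ i, i < j → gg m i < gg m j := by
  intro j
  induction j using Nat.strong_induction_on with
  | _ j ih =>
    intro hj i hij
    by_cases hjm : j < m
    · rw [gg_base hjm, gg_base (by omega)]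
      omega
    · push_neg at hjm
      rw [gg_rec hjm hj]
      have hm2 : 2 ≤ m := by omega
      have hu : 2*(j-m) + 1 < 2*m - 1 := by omega
      have hu' : 2*(j-m) < 2*m - 1 := by omega
      by_cases him : i < m
      · -- gg i = m+i+1 ≤ 2m; each component ≥ g0 = m+1, g1 = m+2
        rw [gg_base him]
        have h0 : (m:ℤ) + 1 ≤ gg m (2*(j-m)) := by
          rcases Nat.eq_zero_or_pos (j-m) with h | h
          · rw [h]; rw [gg_base (by omega)]; push_cast; omega
          · have := ih (2*(j-m)) (by omega) hu' 0 (by omega)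
            rw [gg_base (by omega)] at this; push_cast at this ⊢; omega
        have h1 : (m:ℤ) + 2 ≤ gg m (2*(j-m)+1) := by
          rcases Nat.lt_or_ge 1 (2*(j-m)+1) with h | h
          · have := ih (2*(j-m)+1) (by omega) hu 1 h
            rw [gg_base (by omega)] at this; push_cast at this ⊢; omega
          · have h2 : 2*(j-m)+1 = 1 := by omega
            rw [h2, gg_base (by omega)]; push_cast; omega
        omega
      · push_neg at him
        rw [gg_rec him (by omega)]
        have c1 := ih (2*(j-m)) (by omega) hu' (2*(i-m)) (by omega)
        have c2 := ih (2*(j-m)+1) (by omega) hu (2*(i-m)+1) (by omega)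
        omega

lemma gg_pos {m : ℕ} {j : ℕ} (hj : j < 2*m-1) : 0 < gg m j := by
  rcases Nat.eq_zero_or_pos j with h | h
  · subst h; rw [gg_base (by omega)]; positivity
  · have h0 := gg_mono j hj 0 h
    rw [gg_base (by omega)] at h0
    have : (0:ℤ) < (m:ℤ) + 0 + 1 := by positivity
    omega

def aa (m i : ℕ) : ℤ := ∑ j ∈ Finset.range i, gg m j

lemma aa_mono {m : ℕ} {i j : ℕ} (hij : i < j) (hj : j ≤ 2*m-1) : aa m i < aa m j := by
  unfold aa
  rw [← Finset.sum_range_add_sum_Ico _ (le_of_lt hij)]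
  have : 0 < ∑ k ∈ Finset.Ico i j, gg m k := by
    apply Finset.sum_pos
    · intro k hk
      simp only [Finset.mem_Ico] at hk
      exact gg_pos (by omega)
    · exact ⟨i, by simp [Finset.mem_Ico]; omega⟩
  omega

lemma aa_inj {m i j : ℕ} (hi : i < 2*m) (hj : j < 2*m) (h : aa m i = aa m j) : i = j := by
  rcases lt_trichotomy i j with hl | he | hl
  · exact absurd h (ne_of_lt (aa_mono hl (by omega)))
  · exact he
  · exact absurd h.symm (ne_of_lt (aa_mono hl (by omega)))

lemma aa_key {m : ℕ} : ∀ k, k < m → aa m (m+k) - aa m (2*k) = aa m m := by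
  intro k
  induction k with
  | zero => intro _; simp [aa]
  | succ k ih =>
    intro hk
    have h1 : aa m (m+(k+1)) = aa m (m+k) + gg m (m+k) := by
      show aa m (m+k+1) = _
      unfold aa; rw [Finset.sum_range_succ]
    have h2 : aa m (2*(k+1)) = aa m (2*k) + gg m (2*k) + gg m (2*k+1) := by
      have : 2*(k+1) = (2*k+1)+1 := by omega
      rw [this]
      unfold aa; rw [Finset.sum_range_succ, Finset.sum_range_succ]
    have h3 : gg m (m+k) = gg m (2*k) + gg m (2*k+1) := by
      have := gg_rec (m := m) (j := m+k) (by omega) (by omega)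
      simpa using this
    have := ih (by omega)
    omega


/-- For every `m ≥ 1` there is a convex set `A ⊆ ℤ` with `|A| = 2m` and a
nonzero `d ∈ A - A` with `r_{A-A}(d) ≥ m`. -/
theorem convex_set_with_rich_difference_int (m : ℕ) (hm : 1 ≤ m) :
    ∃ A : Finset ℤ, IsConvexSet A ∧ A.card = 2 * m ∧
      ∃ d : ℤ, d ≠ 0 ∧ d ∈ A - A ∧ m ≤ repDiff A d := by
  set L : List ℤ := (List.range (2*m)).map (aa m) with hL
  have hnodup : L.Nodup := by
    refine List.nodup_range.map_on ?_
    intro i hi j hj h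
    exact aa_inj (List.mem_range.mp hi) (List.mem_range.mp hj) h
  have hsorted : L.Pairwise (· ≤ ·) := by
    rw [hL, List.pairwise_map]
    refine List.pairwise_lt_range.imp_of_mem ?_
    intro i j hi hj hij
    exact le_of_lt (aa_mono hij (by have := List.mem_range.mp hj; omega))
  have hlen : L.length = 2*m := by simp [hL]
  have hsort : (L.toFinset).sort (· ≤ ·) = L := (List.toFinset_sort _ hnodup).mpr hsorted
  have hget : ∀ i (h : i < 2*m), L.get ⟨i, by omega⟩ = aa m i := by
    intro i h
    simp [hL, List.getElem_map, List.getElem_range]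
  have hmem : ∀ i, i < 2*m → aa m i ∈ L.toFinset := by
    intro i h
    rw [List.mem_toFinset, hL, List.mem_map]
    exact ⟨i, List.mem_range.mpr h, rfl⟩
  refine ⟨L.toFinset, ?_, ?_, aa m m, ?_, ?_, ?_⟩
  · -- convex
    intro i h
    have hlen' : (Finset.sort L.toFinset (· ≤ ·)).length = 2*m := by rw [hsort, hlen]
    have hs : ∀ (i : ℕ) (hi : i < (Finset.sort L.toFinset (· ≤ ·)).length),
        (Finset.sort L.toFinset (· ≤ ·)).get ⟨i, hi⟩ = aa m i := by
      intro i hi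
      rw [List.get_of_eq hsort ⟨i, hi⟩]
      exact hget i (by rw [hlen'] at hi; exact hi)
    rw [hs, hs, hs]
    have e1 : aa m (i+1) - aa m i = gg m i := by unfold aa; rw [Finset.sum_range_succ]; ring
    have e2 : aa m (i+2) - aa m (i+1) = gg m (i+1) := by
      show aa m (i+1+1) - _ = _
      unfold aa; rw [Finset.sum_range_succ]; ring
    rw [e1, e2]
    exact gg_mono (i+1) (by omega) i (by omega)
  · rw [List.card_toFinset, hnodup.dedup, hlen]
  · -- d ≠ 0
    have h1 : aa m 0 < aa m m := aa_mono (by omega) (by omega)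
    have h0 : aa m 0 = 0 := by simp [aa]
    rw [h0] at h1
    exact ne_of_gt h1
  · -- d ∈ A - A
    have h0 : aa m 0 = 0 := by simp [aa]
    have := Finset.sub_mem_sub (hmem m (by omega)) (hmem 0 (by omega))
    rwa [h0, sub_zero] at this
  · -- repDiff
    unfold repDiff
    have hmaps : ∀ k ∈ Finset.range m, (fun k => ((aa m (m+k), aa m (2*k)) : ℤ × ℤ)) k ∈
        (L.toFinset ×ˢ L.toFinset).filter fun p => p.1 - p.2 = aa m m := by
      intro k hk
      have hk' := Finset.mem_range.mp hk
      simp only [Finset.mem_filter, Finset.mem_product]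
      exact ⟨⟨hmem _ (by omega), hmem _ (by omega)⟩, aa_key k hk'⟩
    have hinj : Set.InjOn (fun k => ((aa m (m+k), aa m (2*k)) : ℤ × ℤ))
        (Finset.range m) := by
      intro k1 h1 k2 h2 h
      simp only [Finset.coe_range, Set.mem_Iio] at h1 h2
      have := aa_inj (i := m+k1) (j := m+k2) (by omega) (by omega)
        (congrArg Prod.fst h)
      omega
    calc m = (Finset.range m).card := by simp
    _ ≤ _ := Finset.card_le_card_of_injOn _ hmaps hinj
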